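/- arXiv:2204.14080 — 4 statements merged into one kernel-verified Lean document; each statement's English description precedes it below -/
import Mathlib

section
/- Let Γ be an even Artin graph with vertex set V and G its Artin group. For any subset S of V, the map sending each generator s ∈ S to itself and each generator v ∈ V \ S to 1 extends to a well-defined group homomorphism ρ_S : G → G_S which restricts to the identity on the standard parabolic subgroup G_S (i.e., G_S is a retract of G). -/
/-- An Artin graph: a simplicial graph with even/arbitrary labels; `m u v = 0`
means `u` and `v` are not joined by an edge, otherwise `m u v ≥ 2` is the label. -/
structure ArtinGraph (V : Type) where
  m : V → V → ℕ
  symm : ∀ u v, m u v = m v u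
  loopless : ∀ v, m v v = 0
  ne_one : ∀ u v, m u v ≠ 1

namespace ArtinGraph

variable {V : Type}

/-- `word u v n` is the prefix of length `n` of the alternating word `uvuv…`. -/
def word : V → V → ℕ → FreeGroup V
  | _, _, 0 => 1
  | u, v, n + 1 => FreeGroup.of u * word v u n

/-- The Artin relations of the graph. -/
def rels (Γ : ArtinGraph V) : Set (FreeGroup V) :=
  {r | ∃ u v, Γ.m u v ≠ 0 ∧ r = word u v (Γ.m u v) * (word v u (Γ.m u v))⁻¹}

/-- The Artin group of an Artin graph. -/
def ArtinGroup (Γ : ArtinGraph V) : Type := PresentedGroup Γ.rels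

instance (Γ : ArtinGraph V) : Group Γ.ArtinGroup :=
  inferInstanceAs (Group (PresentedGroup Γ.rels))

/-- The generator of the Artin group corresponding to a vertex. -/
def gen (Γ : ArtinGraph V) (v : V) : Γ.ArtinGroup := PresentedGroup.of v

/-- The standard parabolic subgroup on a set `S` of vertices. -/
def std (Γ : ArtinGraph V) (S : Set V) : Subgroup Γ.ArtinGroup :=
  Subgroup.closure (Γ.gen '' S)

/-- The conjugate `g H g⁻¹` of a subgroup. -/
def conjP {G : Type*} [Group G] (g : G) (H : Subgroup G) : Subgroup G :=
  H.map (MulAut.conj g).toMonoidHom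

/-- A parabolic subgroup is a conjugate of a standard parabolic subgroup. -/
def IsParabolic (Γ : ArtinGraph V) (P : Subgroup Γ.ArtinGroup) : Prop :=
  ∃ (S : Set V) (g : Γ.ArtinGroup), P = conjP g (Γ.std S)

/-- An Artin graph is even if all labels are even. -/
def IsEven (Γ : ArtinGraph V) : Prop := ∀ u v, Even (Γ.m u v)

/-- The FC condition for even Artin graphs: in every triangle at least two of
the three labels are equal to `2`. -/
def IsFC (Γ : ArtinGraph V) : Prop :=
  ∀ u v w, Γ.m u v ≠ 0 → Γ.m v w ≠ 0 → Γ.m w u ≠ 0 →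
    (Γ.m u v = 2 ∧ Γ.m v w = 2) ∨ (Γ.m v w = 2 ∧ Γ.m w u = 2) ∨
      (Γ.m u v = 2 ∧ Γ.m w u = 2)

/-- The link of a vertex. -/
def lk (Γ : ArtinGraph V) (x : V) : Set V := {u | Γ.m x u ≠ 0}

/-- The star of a vertex. -/
def star (Γ : ArtinGraph V) (x : V) : Set V := insert x (Γ.lk x)

end ArtinGraph

/-! For even labels `m = 2k` the Artin relation reads `(uv)^k = (vu)^k`, which holds trivially
as soon as `u` or `v` is sent to `1`. Hence the assignment `s ↦ s` on `S`, `v ↦ 1` off `S`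
respects every relation: an edge inside `S` is sent to a relation of `G_S` itself, and any other
edge has an endpoint sent to `1`. The resulting map is the identity on the generators of `G_S`,
hence on `G_S`. -/

namespace ArtinGraph

variable {V : Type} {Γ : ArtinGraph V}

theorem word_two_mul (u v : V) (k : ℕ) :
    word u v (2 * k) = (FreeGroup.of u * FreeGroup.of v) ^ k := by
  induction k generalizing u v with
  | zero => rfl
  | succ k ih =>
    show word u v (2 * k + 1 + 1) = _
    rw [word, word, ih, pow_succ', mul_assoc]

theorem word_of_even {n : ℕ} (hn : Even n) (u v : V) :
    word u v n = (FreeGroup.of u * FreeGroup.of v) ^ (n / 2) := by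
  rw [← word_two_mul, Nat.two_mul_div_two_of_even hn]

theorem IsEven.gen_mul_gen_pow_eq (hΓ : Γ.IsEven) (u v : V) :
    (Γ.gen u * Γ.gen v) ^ (Γ.m u v / 2) = (Γ.gen v * Γ.gen u) ^ (Γ.m u v / 2) := by
  by_cases hm : Γ.m u v = 0
  · simp [hm]
  have hrel := PresentedGroup.mk_eq_mk_of_mul_inv_mem (rels := Γ.rels) ⟨u, v, hm, rfl⟩
  simp only [word_of_even (hΓ u v), map_pow, map_mul] at hrel
  exact hrel

def IsEven.lift (hΓ : Γ.IsEven) {H : Type*} [Group H] (f : V → H)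
    (hf : ∀ u v, (f u * f v) ^ (Γ.m u v / 2) = (f v * f u) ^ (Γ.m u v / 2)) :
    Γ.ArtinGroup →* H :=
  PresentedGroup.toGroup (f := f) <| by
    rintro _ ⟨u, v, -, rfl⟩
    simpa [word_of_even (hΓ u v), mul_inv_eq_one] using hf u v

theorem IsEven.lift_gen (hΓ : Γ.IsEven) {H : Type*} [Group H] (f : V → H)
    (hf : ∀ u v, (f u * f v) ^ (Γ.m u v / 2) = (f v * f u) ^ (Γ.m u v / 2)) (v : V) :
    hΓ.lift f hf (Γ.gen v) = f v :=
  PresentedGroup.toGroup.of _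

theorem gen_mem_std {S : Set V} {s : V} (hs : s ∈ S) : Γ.gen s ∈ Γ.std S :=
  Subgroup.subset_closure ⟨s, hs, rfl⟩

open Classical in
noncomputable def retractionGen (Γ : ArtinGraph V) (S : Set V) (v : V) : Γ.std S :=
  if hv : v ∈ S then ⟨Γ.gen v, gen_mem_std hv⟩ else 1

theorem retractionGen_of_mem {S : Set V} {s : V} (hs : s ∈ S) :
    (Γ.retractionGen S s : Γ.ArtinGroup) = Γ.gen s := by
  simp [retractionGen, hs]

theorem retractionGen_of_notMem {S : Set V} {v : V} (hv : v ∉ S) :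
    Γ.retractionGen S v = 1 := by
  simp [retractionGen, hv]

theorem IsEven.retractionGen_mul_pow_eq (hΓ : Γ.IsEven) (S : Set V) (u v : V) :
    (Γ.retractionGen S u * Γ.retractionGen S v) ^ (Γ.m u v / 2) =
      (Γ.retractionGen S v * Γ.retractionGen S u) ^ (Γ.m u v / 2) := by
  by_cases hu : u ∈ S
  · by_cases hv : v ∈ S
    · apply Subtype.ext
      simpa [retractionGen_of_mem hu, retractionGen_of_mem hv] using hΓ.gen_mul_gen_pow_eq u v
    · simp [retractionGen_of_notMem hv]
  · simp [retractionGen_of_notMem hu]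

noncomputable def IsEven.retraction (hΓ : Γ.IsEven) (S : Set V) : Γ.ArtinGroup →* Γ.std S :=
  hΓ.lift (Γ.retractionGen S) (hΓ.retractionGen_mul_pow_eq S)

@[simp]
theorem IsEven.retraction_gen (hΓ : Γ.IsEven) (S : Set V) (v : V) :
    hΓ.retraction S (Γ.gen v) = Γ.retractionGen S v :=
  hΓ.lift_gen _ _ v

theorem IsEven.retraction_apply_coe (hΓ : Γ.IsEven) {S : Set V} (p : Γ.std S) :
    hΓ.retraction S p = p := by
  have hgens : Set.EqOn ((Γ.std S).subtype.comp (hΓ.retraction S)) (MonoidHom.id _)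
      (Γ.gen '' S) := by
    rintro _ ⟨s, hs, rfl⟩
    simp [retractionGen_of_mem hs]
  exact Subtype.ext (MonoidHom.eqOn_closure hgens p.2)

end ArtinGraph

open ArtinGraph in
/-- for an even Artin graph, the standard parabolic `G_S` is a
retract of `G`: the assignment `s ↦ s` (`s ∈ S`), `v ↦ 1` (`v ∉ S`) extends to a
homomorphism `ρ_S : G → G_S` restricting to the identity on `G_S`. -/
theorem stmt0 {V : Type} (Γ : ArtinGraph V) (hEven : Γ.IsEven) (S : Set V) :
    ∃ ρ : Γ.ArtinGroup →* (Γ.std S),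
      (∀ s ∈ S, (ρ (Γ.gen s) : Γ.ArtinGroup) = Γ.gen s) ∧
      (∀ v ∉ S, (ρ (Γ.gen v) : Γ.ArtinGroup) = 1) ∧
      (∀ p : (Γ.std S), ρ (p : Γ.ArtinGroup) = p) :=
  ⟨hEven.retraction S,
    fun _ hs => by rw [hEven.retraction_gen, retractionGen_of_mem hs],
    fun _ hv => by rw [hEven.retraction_gen, retractionGen_of_notMem hv, OneMemClass.coe_one],
    hEven.retraction_apply_coe⟩
end

section
/- Let Γ be an even Artin graph with Artin group G, A, B ⊆ V, and g, h ∈ G. If the conjugate gG_Ag^{-1} is properly contained in hG_Bh^{-1}, then A is properly contained in B. -/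
/-!
Exponent sums and the retractions `ρ_S` are well defined because every relation of an even
Artin group has the form `(uv)^k = (vu)^k`. If `a ∈ A \ B`, the exponent sum in `a` kills
`hG_Bh⁻¹` but not `g a g⁻¹ ∈ gG_Ag⁻¹`, so `A ⊆ B`. If `A = B`, then `k = h⁻¹g` satisfies
`kG_Ak⁻¹ < G_A`; applying `ρ_A` to `kzk⁻¹ ∈ G_A` gives `kzk⁻¹ = ρ_A(k) z ρ_A(k)⁻¹` for
`z ∈ G_A`, and since `ρ_A(k) ∈ G_A` this forces `kG_Ak⁻¹ = G_A`.
-/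

namespace ArtinGraph

section ConjP

variable {G : Type*} [Group G]

theorem mem_conjP {g x : G} {H : Subgroup G} : x ∈ conjP g H ↔ g⁻¹ * x * g ∈ H := by
  constructor
  · rintro ⟨y, hy, rfl⟩
    simpa [MulAut.conj_apply, mul_assoc] using hy
  · intro hx
    exact ⟨g⁻¹ * x * g, hx, by simp [MulAut.conj_apply]; group⟩

theorem conj_mem_conjP {g x : G} {H : Subgroup G} (hx : x ∈ H) : g * x * g⁻¹ ∈ conjP g H :=
  ⟨x, hx, rfl⟩

theorem conjP_mul (a b : G) (H : Subgroup G) : conjP (a * b) H = conjP a (conjP b H) := by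
  ext x
  simp [mem_conjP, mul_assoc]

theorem conjP_le_conjP_iff (c : G) {H K : Subgroup G} : conjP c H ≤ conjP c K ↔ H ≤ K :=
  Subgroup.map_le_map_iff_of_injective (MulAut.conj c).injective

theorem conjP_lt_conjP_iff (c : G) {H K : Subgroup G} : conjP c H < conjP c K ↔ H < K := by
  simp only [lt_iff_le_not_ge, conjP_le_conjP_iff]

theorem le_ker_of_conjP_le_conjP {M : Type*} [CommGroup M] (φ : G →* M) {g h : G}
    {H K : Subgroup G} (hle : conjP g K ≤ conjP h H) (hH : H ≤ φ.ker) : K ≤ φ.ker := by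
  intro x hx
  have hconj : h⁻¹ * (g * x * g⁻¹) * h ∈ φ.ker := hH (mem_conjP.1 (hle (conj_mem_conjP hx)))
  simpa [MonoidHom.mem_ker] using hconj

theorem not_conjP_lt_conjP_of_retraction (ρ : G →* G) {H : Subgroup G}
    (hρ_mem : ∀ x, ρ x ∈ H) (hρ_fix : ∀ x ∈ H, ρ x = x) (g h : G) :
    ¬ conjP g H < conjP h H := by
  set k := h⁻¹ * g
  rw [show g = h * k by simp [k], conjP_mul, conjP_lt_conjP_iff]
  intro hlt
  have hconj : ∀ z ∈ H, k * z * k⁻¹ = ρ k * z * (ρ k)⁻¹ := fun z hz => by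
    rw [← hρ_fix _ (hlt.le (conj_mem_conjP hz)), map_mul, map_mul, map_inv, hρ_fix z hz]
  refine hlt.not_ge fun x hx => mem_conjP.2 ?_
  have hz : (ρ k)⁻¹ * x * ρ k ∈ H := H.mul_mem (H.mul_mem (H.inv_mem (hρ_mem k)) hx) (hρ_mem k)
  have hx' : k⁻¹ * x * k = (ρ k)⁻¹ * x * ρ k :=
    calc k⁻¹ * x * k = k⁻¹ * (k * ((ρ k)⁻¹ * x * ρ k) * k⁻¹) * k := by rw [hconj _ hz]; group
      _ = (ρ k)⁻¹ * x * ρ k := by group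
  rwa [hx']

end ConjP

variable {V : Type} {Γ : ArtinGraph V}

theorem gen_mul_gen_pow_comm {u v : V} {k : ℕ} (hk : Γ.m u v = 2 * k) :
    (Γ.gen u * Γ.gen v) ^ k = (Γ.gen v * Γ.gen u) ^ k := by
  rcases eq_or_ne (Γ.m u v) 0 with hm | hm
  · obtain rfl : k = 0 := by omega
    simp
  have hrel : PresentedGroup.mk Γ.rels (word u v (Γ.m u v) * (word v u (Γ.m u v))⁻¹) = 1 :=
    (QuotientGroup.eq_one_iff _).2 (Subgroup.subset_normalClosure ⟨u, v, hm, rfl⟩)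
  rwa [map_mul, map_inv, hk, word_two_mul, word_two_mul, mul_inv_eq_one, map_pow, map_pow,
    map_mul, map_mul] at hrel

namespace IsEven

variable (hEven : Γ.IsEven)

def lift_s2 {G : Type*} [Group G] (f : V → G)
    (hf : ∀ u v k, Γ.m u v = 2 * k → (f u * f v) ^ k = (f v * f u) ^ k) :
    Γ.ArtinGroup →* G :=
  PresentedGroup.toGroup (f := f) (rels := Γ.rels) <| by
    rintro r ⟨u, v, -, rfl⟩
    obtain ⟨k, hk⟩ := hEven u v
    rw [← two_mul] at hk
    simp only [map_mul, map_inv, hk, word_two_mul, map_pow, FreeGroup.lift_apply_of,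
      hf u v k hk, mul_inv_cancel]

theorem lift_gen_s2 {G : Type*} [Group G] (f : V → G)
    (hf : ∀ u v k, Γ.m u v = 2 * k → (f u * f v) ^ k = (f v * f u) ^ k) (v : V) :
    hEven.lift_s2 f hf (Γ.gen v) = f v :=
  PresentedGroup.toGroup.of _

open scoped Classical in
noncomputable def retraction_s2 (A : Set V) : Γ.ArtinGroup →* Γ.ArtinGroup :=
  hEven.lift_s2 (fun v => if v ∈ A then Γ.gen v else 1) fun u v k hk => by
    by_cases hu : u ∈ A <;> by_cases hv : v ∈ A <;> simp [hu, hv, gen_mul_gen_pow_comm hk]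

open scoped Classical in
theorem retraction_gen_s2 (A : Set V) (v : V) :
    hEven.retraction_s2 A (Γ.gen v) = if v ∈ A then Γ.gen v else 1 :=
  hEven.lift_gen_s2 _ _ v

theorem retraction_mem_std (A : Set V) (x : Γ.ArtinGroup) : hEven.retraction_s2 A x ∈ Γ.std A := by
  refine PresentedGroup.generated_by Γ.rels (Subgroup.comap _ (Γ.std A)) (fun v => ?_) x
  change hEven.retraction_s2 A (Γ.gen v) ∈ Γ.std A
  rw [retraction_gen_s2]
  split_ifs with hv
  · exact Subgroup.subset_closure ⟨v, hv, rfl⟩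
  · exact one_mem _

theorem retraction_of_mem_std {A : Set V} {x : Γ.ArtinGroup} (hx : x ∈ Γ.std A) :
    hEven.retraction_s2 A x = x := by
  refine MonoidHom.eqOn_closure (f := hEven.retraction_s2 A) (g := MonoidHom.id _) ?_ hx
  rintro _ ⟨v, hv, rfl⟩
  simp [retraction_gen_s2, hv]

open scoped Classical in
noncomputable def exponentSum (a : V) : Γ.ArtinGroup →* Multiplicative ℤ :=
  hEven.lift_s2 (fun v => if v = a then Multiplicative.ofAdd 1 else 1) fun _ _ _ _ => by
    rw [mul_comm]

theorem exponentSum_gen_self (a : V) :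
    hEven.exponentSum a (Γ.gen a) = Multiplicative.ofAdd 1 := by
  simp [exponentSum, lift_gen_s2]

theorem std_le_ker_exponentSum {a : V} {B : Set V} (ha : a ∉ B) :
    Γ.std B ≤ (hEven.exponentSum a).ker := by
  rw [std, Subgroup.closure_le]
  rintro _ ⟨b, hb, rfl⟩
  simp [exponentSum, lift_gen_s2, show b ≠ a by rintro rfl; exact ha hb]

end IsEven

end ArtinGraph

open ArtinGraph in
/-- in an even Artin group, `gG_Ag⁻¹ ⊊ hG_Bh⁻¹` implies `A ⊊ B`. -/
theorem stmt2 {V : Type} (Γ : ArtinGraph V) (hEven : Γ.IsEven) (A B : Set V)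
    (g h : Γ.ArtinGroup) (hlt : conjP g (Γ.std A) < conjP h (Γ.std B)) :
    A ⊂ B := by
  have hsub : A ⊆ B := fun a ha => by
    by_contra haB
    have hker := le_ker_of_conjP_le_conjP _ hlt.le (hEven.std_le_ker_exponentSum haB)
      (Subgroup.subset_closure ⟨a, ha, rfl⟩ : Γ.gen a ∈ Γ.std A)
    simp [MonoidHom.mem_ker, hEven.exponentSum_gen_self] at hker
  refine hsub.ssubset_of_ne ?_
  rintro rfl
  exact not_conjP_lt_conjP_of_retraction _ (hEven.retraction_mem_std A)
    (fun _ => hEven.retraction_of_mem_std) g h hlt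
end

section
/- Let G be the Artin group on two generators a, x with single relation (ax)^k = (xa)^k (edge label 2k, k ≥ 1). For any g ∈ G, the intersection ⟨a⟩ ∩ g⟨a⟩g^{-1} is either equal to ⟨a⟩ or trivial. -/
open ArtinGraph in
/-- The dihedral-type even Artin graph on two vertices with label `2k`. -/
def edgeGraph (k : ℕ) : ArtinGraph Bool where
  m u v := if u = v then 0 else 2 * k
  symm u v := by rcases u <;> rcases v <;> rfl
  loopless v := by simp
  ne_one u v := by
    rcases u <;> rcases v <;> simp <;> omega


/-!
Put `y = a x`. Since `(x a)^k = a⁻¹ (a x)^k a`, the relation says that `y ^ k` commutes with `a`,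
so `G` is the semidirect product `F(ℤ/k) ⋊ ℤ` in which the free factor has basis
`aᵢ = yⁱ a y⁻ⁱ` and `y` shifts the indices; in particular `G` embeds into it with `a ↦ a₀`.
If `g aᵐ g⁻¹ = aⁿ ≠ 1`, then inside the free factor `uᵐ = a₀ⁿ` for a conjugate `u` of some `aᵢ`.
Exponent sums give `m = n`, and uniqueness of roots in free groups gives `u = a₀`, so `g`
commutes with `a` and `⟨a⟩ ∩ g⟨a⟩g⁻¹ = ⟨a⟩`.
-/

theorem mul_pow_eq_mul_pow_iff_commute {G : Type*} [Group G] (b c : G) (k : ℕ) :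
    (b * c) ^ k = (c * b) ^ k ↔ Commute b ((b * c) ^ k) := by
  have h : b * (c * b) ^ k = (b * c) ^ k * b := (SemiconjBy.pow_right (mul_assoc b c b).symm k).eq
  refine ⟨fun e => ?_, fun hc => mul_left_cancel (hc.eq.trans h.symm)⟩
  rw [Commute, SemiconjBy]
  nth_rewrite 1 [e]
  exact h

theorem conj_zpow_apply_eq_of_modEq {G : Type*} [Group G] {y a : G} {k : ℕ}
    (h : Commute (y ^ k) a) {p q : ℤ} (hpq : p ≡ q [ZMOD k]) :
    MulAut.conj (y ^ p) a = MulAut.conj (y ^ q) a := by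
  obtain ⟨t, ht⟩ := Int.modEq_iff_dvd.mp hpq
  have hq : q = p + k * t := by omega
  rw [hq, zpow_add, zpow_mul, zpow_natCast, map_mul, MulAut.mul_apply,
    MulAut.conj_apply ((y ^ k) ^ t), (h.zpow_left t).eq, mul_inv_cancel_right]

theorem ArtinGraph.zpowers_inf_conjP_eq_or_eq_bot {G : Type*} [Group G] {a g : G}
    (h : ∀ m n : ℤ, n ≠ 0 → g * a ^ m * g⁻¹ = a ^ n → g * a * g⁻¹ = a) :
    Subgroup.zpowers a ⊓ conjP g (Subgroup.zpowers a) = Subgroup.zpowers a ∨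
      Subgroup.zpowers a ⊓ conjP g (Subgroup.zpowers a) = ⊥ := by
  refine or_iff_not_imp_right.mpr fun hne => inf_eq_left.mpr ?_
  obtain ⟨_, hb, hb1⟩ := (Subgroup.bot_or_exists_ne_one _).resolve_left hne
  obtain ⟨⟨n, rfl⟩, hconj⟩ := Subgroup.mem_inf.mp hb
  obtain ⟨_, ⟨m, rfl⟩, hm⟩ := Subgroup.mem_map.mp hconj
  have hga : g * a * g⁻¹ = a :=
    h m n (by rintro rfl; simp at hb1) (by simpa [MulAut.conj_apply] using hm)
  rw [Subgroup.zpowers_le]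
  exact Subgroup.mem_map.mpr ⟨a, Subgroup.mem_zpowers a, by simpa [MulAut.conj_apply] using hga⟩

theorem FreeGroup.conj_of_eq_of_conj_of_zpow_eq {α : Type*} {w : FreeGroup α} {c d : α}
    {m n : ℤ} (hn : n ≠ 0) (h : w * of d ^ m * w⁻¹ = of c ^ n) : w * of d * w⁻¹ = of c := by
  let exponentSum : FreeGroup α →* Multiplicative ℤ := lift fun _ => Multiplicative.ofAdd 1
  have hmn : m = n := by
    simpa [exponentSum] using congrArg (fun x => Multiplicative.toAdd (exponentSum x)) h
  subst hmn
  exact zpow_left_injective hn (by simpa [conj_zpow] using h)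

theorem SemidirectProduct.mul_inl_mul_inv {N G : Type*} [Group N] [Group G] {φ : G →* MulAut N}
    (g : N ⋊[φ] G) (n : N) :
    g * inl n * g⁻¹ = inl (g.left * φ g.right n * g.left⁻¹) := by
  ext <;> simp [mul_left, inv_left, mul_right, inv_right]

theorem ArtinGraph.word_two_mul_s9 {V : Type} (u v : V) (j : ℕ) :
    word u v (2 * j) = (FreeGroup.of u * FreeGroup.of v) ^ j := by
  induction j with
  | zero => rfl
  | succ j ih => rw [Nat.mul_succ, word, word, ih, pow_succ', mul_assoc]

namespace edgeGraph

open ArtinGraph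

variable {k : ℕ}

theorem gen_mul_gen_pow_eq :
    ((edgeGraph k).gen false * (edgeGraph k).gen true) ^ k =
      ((edgeGraph k).gen true * (edgeGraph k).gen false) ^ k := by
  rcases Nat.eq_zero_or_pos k with rfl | hk
  · simp
  have hrel : word false true (2 * k) * (word true false (2 * k))⁻¹ ∈ (edgeGraph k).rels :=
    ⟨false, true, by simp [edgeGraph]; omega, rfl⟩
  have := PresentedGroup.one_of_mem hrel
  rwa [word_two_mul_s9, word_two_mul_s9, map_mul, map_inv, mul_inv_eq_one, map_pow, map_pow, map_mul,
    map_mul] at this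

theorem commute_gen_mul_gen_pow :
    Commute (((edgeGraph k).gen false * (edgeGraph k).gen true) ^ k) ((edgeGraph k).gen false) :=
  ((mul_pow_eq_mul_pow_iff_commute _ _ k).mp gen_mul_gen_pow_eq).symm

def lift {H : Type*} [Group H] (b c : H) (h : (b * c) ^ k = (c * b) ^ k) :
    (edgeGraph k).ArtinGroup →* H :=
  PresentedGroup.toGroup (f := fun v => if v then c else b) <| by
    rintro r ⟨u, v, huv, rfl⟩
    cases u <;> cases v <;> simp_all [edgeGraph, word_two_mul_s9]

variable {H : Type*} [Group H] {b c : H} {h : (b * c) ^ k = (c * b) ^ k}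

@[simp]
theorem lift_gen_false : lift b c h ((edgeGraph k).gen false) = b :=
  PresentedGroup.toGroup.of _

@[simp]
theorem lift_gen_true : lift b c h ((edgeGraph k).gen true) = c :=
  PresentedGroup.toGroup.of _

end edgeGraph

namespace ShiftModel

variable (k : ℕ)

def shift : Multiplicative ℤ →* MulAut (FreeGroup (ZMod k)) where
  toFun r := FreeGroup.freeGroupCongr (Equiv.addRight (r.toAdd : ZMod k))
  map_one' := by ext; simp
  map_mul' r s := MulEquiv.toMonoidHom_injective <|
    FreeGroup.ext_hom _ _ fun i => by simp [add_left_comm, add_comm]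

@[simp]
theorem shift_apply_of (r : Multiplicative ℤ) (i : ZMod k) :
    shift k r (FreeGroup.of i) = FreeGroup.of (i + r.toAdd) := by
  simp [shift]

abbrev Model : Type := FreeGroup (ZMod k) ⋊[shift k] Multiplicative ℤ

def a : Model k := SemidirectProduct.inl (FreeGroup.of 0)

def y : Model k := SemidirectProduct.inr (Multiplicative.ofAdd 1)

theorem commute_y_pow_a : Commute (y k ^ k) (a k) := by
  have hyk : y k ^ k = SemidirectProduct.inr (Multiplicative.ofAdd (k : ℤ)) := by
    rw [y, ← map_pow, ← ofAdd_nsmul, nsmul_one]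
  rw [hyk, a, Commute, SemiconjBy, ← mul_inv_eq_iff_eq_mul, ← map_inv,
    ← SemidirectProduct.inl_aut, shift_apply_of]
  simp

variable {k} in
theorem conj_a_eq_of_conj_a_zpow_eq {g : Model k} {m n : ℤ} (hn : n ≠ 0)
    (h : g * a k ^ m * g⁻¹ = a k ^ n) : g * a k * g⁻¹ = a k := by
  rw [a, ← map_zpow, ← map_zpow, SemidirectProduct.mul_inl_mul_inv, map_zpow, shift_apply_of,
    zero_add, SemidirectProduct.inl_inj] at h
  rw [a, SemidirectProduct.mul_inl_mul_inv, shift_apply_of, zero_add,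
    FreeGroup.conj_of_eq_of_conj_of_zpow_eq hn h]

def toModel : (edgeGraph k).ArtinGroup →* Model k :=
  edgeGraph.lift (a k) ((a k)⁻¹ * y k) <| by
    rw [mul_pow_eq_mul_pow_iff_commute, mul_inv_cancel_left]
    exact (commute_y_pow_a k).symm

def ofModel : Model k →* (edgeGraph k).ArtinGroup :=
  SemidirectProduct.lift
    (FreeGroup.lift fun i : ZMod k =>
      MulAut.conj (((edgeGraph k).gen false * (edgeGraph k).gen true) ^ (i.cast : ℤ))
        ((edgeGraph k).gen false))
    (zpowersHom _ ((edgeGraph k).gen false * (edgeGraph k).gen true)) <| fun r =>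
    FreeGroup.ext_hom _ _ fun i => by
      simp only [MonoidHom.comp_apply, MulEquiv.coe_toMonoidHom, shift_apply_of,
        FreeGroup.lift_apply_of, zpowersHom_apply, ← MulAut.mul_apply, ← map_mul, ← zpow_add]
      refine conj_zpow_apply_eq_of_modEq edgeGraph.commute_gen_mul_gen_pow ?_
      rw [← ZMod.intCast_eq_intCast_iff]
      push_cast [ZMod.intCast_zmod_cast]
      ring

theorem ofModel_toModel (g : (edgeGraph k).ArtinGroup) : ofModel k (toModel k g) = g := by
  suffices (ofModel k).comp (toModel k) = MonoidHom.id _ from DFunLike.congr_fun this g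
  refine PresentedGroup.ext fun v => ?_
  change ofModel k (toModel k ((edgeGraph k).gen v)) = (edgeGraph k).gen v
  cases v
  · simp [toModel, ofModel, a]
  · simp [toModel, ofModel, a, y]

theorem toModel_injective : Function.Injective (toModel k) :=
  Function.LeftInverse.injective (ofModel_toModel k)

end ShiftModel

theorem edgeGraph.conj_gen_false_eq_of_conj_zpow_eq {k : ℕ} {g : (edgeGraph k).ArtinGroup}
    {m n : ℤ} (hn : n ≠ 0)
    (h : g * (edgeGraph k).gen false ^ m * g⁻¹ = (edgeGraph k).gen false ^ n) :
    g * (edgeGraph k).gen false * g⁻¹ = (edgeGraph k).gen false := by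
  apply ShiftModel.toModel_injective k
  have := congrArg (ShiftModel.toModel k) h
  simp only [map_mul, map_inv, map_zpow] at this ⊢
  exact ShiftModel.conj_a_eq_of_conj_a_zpow_eq hn this

open ArtinGraph in
/-- `a` is the generator `false` and `x` the generator `true`. -/
theorem stmt9_general (k : ℕ) (g : (edgeGraph k).ArtinGroup) :
    Subgroup.closure {(edgeGraph k).gen false} ⊓
        conjP g (Subgroup.closure {(edgeGraph k).gen false}) =
      Subgroup.closure {(edgeGraph k).gen false} ∨
    Subgroup.closure {(edgeGraph k).gen false} ⊓
        conjP g (Subgroup.closure {(edgeGraph k).gen false}) = ⊥ := by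
  rw [← Subgroup.zpowers_eq_closure]
  exact zpowers_inf_conjP_eq_or_eq_bot fun _ _ hn => edgeGraph.conj_gen_false_eq_of_conj_zpow_eq hn

open ArtinGraph in
/-- in the Artin group `⟨a, x ∣ (ax)^k = (xa)^k⟩` (label `2k`,
`k ≥ 1`), for any `g` the intersection `⟨a⟩ ∩ g⟨a⟩g⁻¹` is `⟨a⟩` or trivial.
Here `a` is the generator for `false` and `x` the one for `true`. -/
theorem stmt9 (k : ℕ) (hk : 1 ≤ k) (g : (edgeGraph k).ArtinGroup) :
    Subgroup.closure {(edgeGraph k).gen false} ⊓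
        conjP g (Subgroup.closure {(edgeGraph k).gen false}) =
      Subgroup.closure {(edgeGraph k).gen false} ∨
    Subgroup.closure {(edgeGraph k).gen false} ⊓
        conjP g (Subgroup.closure {(edgeGraph k).gen false}) = ⊥ :=
  stmt9_general k g
end

section
/- Let Γ be a right-angled Artin graph (all edge labels equal 2). Then the intersection of any two parabolic subgroups of the right-angled Artin group G_Γ is a parabolic subgroup. -/
/-!
Words in the letters `v^{±1}` represent the elements of the right-angled Artin group, and two
reduced words (no letter can be shuffled next to its inverse) represent the same element iff
they are equal up to swapping adjacent commuting letters. This normal form theorem comes from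
letting the group act on shuffle classes of reduced words, a letter acting by left
multiplication followed by the possible cancellation (`consReduce`).

After conjugating, it suffices to show that `G_A ∩ w G_B w⁻¹` is parabolic for a reduced word
`w`. A letter of `A` that can be shuffled to the front of `w`, or a letter of `B` that can be
shuffled to its end, can be deleted from `w`, changing the intersection only by a conjugation.
When there is none, an element of the intersection is `eval u = eval (w v w⁻¹)` with `u` over
`A` and `v` over `B` reduced, `u ++ w` and `w ++ v` are reduced words for the same element, and
Levi's lemma on their shuffle makes `u` and `v` shuffles of one word commuting with `w`. Hence the
intersection is `G_C`, where `C` consists of the vertices of `A ∩ B` adjacent to every letter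
of `w`.
-/

namespace ArtinGraph

variable {V : Type}

def IsRightAngled (Γ : ArtinGraph V) : Prop := ∀ u v, Γ.m u v = 0 ∨ Γ.m u v = 2

end ArtinGraph

namespace Raag

open ArtinGraph

variable {V : Type} {Γ : ArtinGraph V}

/-- `(v, true)` stands for the generator `v` and `(v, false)` for its inverse. -/
abbrev Word (V : Type) := List (V × Bool)

def invLetter (a : V × Bool) : V × Bool := (a.1, !a.2)

@[simp] lemma invLetter_invLetter (a : V × Bool) : invLetter (invLetter a) = a := by
  simp [invLetter]

@[simp] lemma invLetter_fst (a : V × Bool) : (invLetter a).1 = a.1 := rfl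

variable (Γ) in
inductive Swap : Word V → Word V → Prop
  | swap (a b : V × Bool) (h : Γ.m a.1 b.1 ≠ 0) (y : Word V) : Swap (a :: b :: y) (b :: a :: y)
  | cons (c : V × Bool) {w w' : Word V} : Swap w w' → Swap (c :: w) (c :: w')

variable (Γ) in
/-- Equality in the free partially commutative monoid on the letters. -/
def Shuffle : Word V → Word V → Prop := Relation.ReflTransGen (Swap Γ)

lemma Swap.symm {w w' : Word V} (h : Swap Γ w w') : Swap Γ w' w := by
  induction h with
  | swap a b h y => exact .swap b a (by rwa [Γ.symm]) y
  | cons c _ ih => exact .cons c ih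

lemma Swap.append_right {w w' : Word V} (h : Swap Γ w w') (y : Word V) :
    Swap Γ (w ++ y) (w' ++ y) := by
  induction h with
  | swap a b h z => exact .swap a b h (z ++ y)
  | cons c _ ih => exact .cons c ih

lemma Swap.perm {w w' : Word V} (h : Swap Γ w w') : w.Perm w' := by
  induction h with
  | swap a b _ y => exact .swap b a y
  | cons c _ ih => exact ih.cons c

@[refl] lemma Shuffle.refl (w : Word V) : Shuffle Γ w w := Relation.ReflTransGen.refl

lemma Shuffle.trans {w₁ w₂ w₃ : Word V} (h : Shuffle Γ w₁ w₂) (h' : Shuffle Γ w₂ w₃) :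
    Shuffle Γ w₁ w₃ :=
  Relation.ReflTransGen.trans h h'

lemma Shuffle.single {w w' : Word V} (h : Swap Γ w w') : Shuffle Γ w w' :=
  Relation.ReflTransGen.single h

lemma Shuffle.symm {w w' : Word V} (h : Shuffle Γ w w') : Shuffle Γ w' w := by
  induction h with
  | refl => rfl
  | tail _ h ih => exact (Shuffle.single h.symm).trans ih

lemma Shuffle.cons {w w' : Word V} (c : V × Bool) (h : Shuffle Γ w w') :
    Shuffle Γ (c :: w) (c :: w') := by
  induction h with
  | refl => rfl
  | tail _ h ih => exact ih.trans (.single (.cons c h))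

lemma Shuffle.append_left {w w' : Word V} (x : Word V) (h : Shuffle Γ w w') :
    Shuffle Γ (x ++ w) (x ++ w') := by
  induction x with
  | nil => exact h
  | cons c x ih => exact ih.cons c

lemma Shuffle.append_right {w w' : Word V} (h : Shuffle Γ w w') (y : Word V) :
    Shuffle Γ (w ++ y) (w' ++ y) := by
  induction h with
  | refl => rfl
  | tail _ h ih => exact ih.trans (.single (h.append_right y))

lemma Shuffle.perm {w w' : Word V} (h : Shuffle Γ w w') : w.Perm w' := by
  induction h with
  | refl => rfl
  | tail _ h ih => exact ih.trans h.perm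

lemma Shuffle.length_eq {w w' : Word V} (h : Shuffle Γ w w') : w.length = w'.length :=
  h.perm.length_eq

lemma Shuffle.mem_iff {w w' : Word V} (h : Shuffle Γ w w') {c : V × Bool} : c ∈ w ↔ c ∈ w' :=
  h.perm.mem_iff

lemma Swap.reverse {w w' : Word V} (h : Swap Γ w w') : Shuffle Γ w.reverse w'.reverse := by
  induction h with
  | swap a b h y =>
      simpa using (Shuffle.single (.swap b a (by rwa [Γ.symm]) [])).append_left y.reverse
  | cons c _ ih => simpa using ih.append_right [c]

lemma Shuffle.reverse {w w' : Word V} (h : Shuffle Γ w w') : Shuffle Γ w.reverse w'.reverse := by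
  induction h with
  | refl => rfl
  | tail _ h ih => exact ih.trans h.reverse

lemma shuffle_move_front {p : Word V} (c : V × Bool) (q : Word V)
    (hp : ∀ b ∈ p, Γ.m c.1 b.1 ≠ 0) : Shuffle Γ (p ++ c :: q) (c :: (p ++ q)) := by
  induction p with
  | nil => rfl
  | cons d p ih =>
      refine ((ih fun b hb => hp b (by simp [hb])).cons d).trans (.single ?_)
      exact .swap d c (by rw [Γ.symm]; exact hp d (by simp)) _

lemma shuffle_move_back (p : Word V) (c : V × Bool) {q : Word V}
    (hq : ∀ b ∈ q, Γ.m c.1 b.1 ≠ 0) : Shuffle Γ (p ++ c :: q) (p ++ q ++ [c]) := by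
  have h := (shuffle_move_front (Γ := Γ) c p.reverse (p := q.reverse)
    (fun b hb => hq b (by simpa using hb))).reverse
  simpa using h

variable (Γ) in
noncomputable def evalLetter (a : V × Bool) : Γ.ArtinGroup :=
  if a.2 then Γ.gen a.1 else (Γ.gen a.1)⁻¹

variable (Γ) in
noncomputable def eval (w : Word V) : Γ.ArtinGroup := (w.map (evalLetter Γ)).prod

@[simp] lemma eval_nil : eval Γ [] = 1 := rfl

@[simp] lemma eval_cons (a : V × Bool) (w : Word V) :
    eval Γ (a :: w) = evalLetter Γ a * eval Γ w := by
  simp [eval]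

@[simp] lemma eval_append (x y : Word V) : eval Γ (x ++ y) = eval Γ x * eval Γ y := by
  simp [eval]

@[simp] lemma evalLetter_invLetter (a : V × Bool) :
    evalLetter Γ (invLetter a) = (evalLetter Γ a)⁻¹ := by
  obtain ⟨v, _ | _⟩ := a <;> simp [evalLetter, invLetter]

lemma eval_reverse_map_invLetter (w : Word V) :
    eval Γ (w.reverse.map invLetter) = (eval Γ w)⁻¹ := by
  induction w with
  | nil => simp
  | cons a w ih => simp_all

lemma commute_gen (hΓ : Γ.IsRightAngled) {u v : V} (h : Γ.m u v ≠ 0) :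
    Commute (Γ.gen u) (Γ.gen v) := by
  have hrel : word u v 2 * (word v u 2)⁻¹ ∈ Γ.rels :=
    ⟨u, v, h, by rw [(hΓ u v).resolve_left h]⟩
  have h := PresentedGroup.mk_eq_mk_of_mul_inv_mem hrel
  simp only [word, mul_one, map_mul] at h
  exact h

lemma commute_evalLetter (hΓ : Γ.IsRightAngled) {a b : V × Bool} (h : Γ.m a.1 b.1 ≠ 0) :
    Commute (evalLetter Γ a) (evalLetter Γ b) := by
  have hc := commute_gen hΓ h
  obtain ⟨u, _ | _⟩ := a <;> obtain ⟨v, _ | _⟩ := b <;> simp [evalLetter, hc]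

lemma commute_evalLetter_eval (hΓ : Γ.IsRightAngled) {a : V × Bool} {p : Word V}
    (hp : ∀ b ∈ p, Γ.m a.1 b.1 ≠ 0) : Commute (evalLetter Γ a) (eval Γ p) := by
  induction p with
  | nil => exact Commute.one_right _
  | cons b p ih =>
      rw [eval_cons]
      exact (commute_evalLetter hΓ (hp b (by simp))).mul_right
        (ih fun x hx => hp x (by simp [hx]))

lemma Swap.eval_eq (hΓ : Γ.IsRightAngled) {w w' : Word V} (h : Swap Γ w w') :
    eval Γ w = eval Γ w' := by
  induction h with
  | swap a b h y => simp only [eval_cons, ← mul_assoc, (commute_evalLetter hΓ h).eq]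
  | cons c _ ih => simp [ih]

lemma Shuffle.eval_eq (hΓ : Γ.IsRightAngled) {w w' : Word V} (h : Shuffle Γ w w') :
    eval Γ w = eval Γ w' := by
  induction h with
  | refl => rfl
  | tail _ h ih => exact ih.trans (h.eval_eq hΓ)

lemma exists_of_append_eq_append_cons {α : Type*} {p q r s : List α} {y : α}
    (h : p ++ q = r ++ y :: s) :
    (∃ t, p = r ++ y :: t ∧ s = t ++ q) ∨ (∃ t, r = p ++ t ∧ q = t ++ y :: s) := by
  rcases List.append_eq_append_iff.mp h with ⟨t, h1, h2⟩ | ⟨_ | ⟨e, t⟩, h1, h2⟩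
  · exact .inr ⟨t, h1, h2⟩
  · exact .inr ⟨[], by simpa using h1.symm, by simpa using h2.symm⟩
  · simp only [List.cons_append, List.cons.injEq] at h2
    exact .inl ⟨t, by rw [h1, h2.1], h2.2⟩

lemma exists_of_append_cons_eq_append_cons {α : Type*} {p q r s : List α} {x y : α}
    (h : p ++ x :: q = r ++ y :: s) (hxy : x ≠ y) :
    (∃ t, r = p ++ x :: t ∧ q = t ++ y :: s) ∨ (∃ t, p = r ++ y :: t ∧ s = t ++ x :: q) := by
  rcases exists_of_append_eq_append_cons h with ⟨t, h1, h2⟩ | ⟨_ | ⟨e, t⟩, h1, h2⟩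
  · exact .inr ⟨t, h1, h2⟩
  · simp only [List.nil_append, List.cons.injEq] at h2
    exact absurd h2.1 hxy
  · simp only [List.cons_append, List.cons.injEq] at h2
    exact .inl ⟨t, by rw [h1, h2.1], h2.2⟩

variable (Γ) in
def FrontMovable (c : V × Bool) (w : Word V) : Prop :=
  ∃ p q, w = p ++ c :: q ∧ ∀ b ∈ p, Γ.m c.1 b.1 ≠ 0

variable (Γ) in
def BackMovable (c : V × Bool) (w : Word V) : Prop :=
  ∃ p q, w = p ++ c :: q ∧ ∀ b ∈ q, Γ.m c.1 b.1 ≠ 0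

variable (Γ) in
def Cancelable (w : Word V) : Prop :=
  ∃ x a y z, w = x ++ a :: (y ++ invLetter a :: z) ∧ ∀ b ∈ y, Γ.m a.1 b.1 ≠ 0

variable (Γ) in
def IsReduced (w : Word V) : Prop := ¬ Cancelable Γ w

lemma frontMovable_cons {c : V × Bool} (w : Word V) : FrontMovable Γ c (c :: w) :=
  ⟨[], w, rfl, by simp⟩

lemma FrontMovable.cons {c b : V × Bool} {w : Word V} (h : FrontMovable Γ c w)
    (hb : Γ.m c.1 b.1 ≠ 0) : FrontMovable Γ c (b :: w) := by
  obtain ⟨p, q, rfl, hp⟩ := h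
  refine ⟨b :: p, q, rfl, ?_⟩
  rintro x (_ | ⟨_, hx⟩)
  exacts [hb, hp x hx]

lemma FrontMovable.of_insert {c a : V × Bool} {p q : Word V}
    (h : FrontMovable Γ c (p ++ a :: q)) (hca : c ≠ a) : FrontMovable Γ c (p ++ q) := by
  obtain ⟨r, s, hrs, hr⟩ := h
  rcases exists_of_append_cons_eq_append_cons hrs hca.symm with ⟨t, rfl, rfl⟩ | ⟨t, rfl, rfl⟩
  · refine ⟨p ++ t, s, by simp, fun b hb => hr b ?_⟩
    rcases List.mem_append.mp hb with hb | hb <;> simp [hb]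
  · exact ⟨r, t ++ q, by simp, hr⟩

lemma FrontMovable.insert {c a : V × Bool} {p q : Word V} (h : FrontMovable Γ c (p ++ q))
    (hca : Γ.m c.1 a.1 ≠ 0) : FrontMovable Γ c (p ++ a :: q) := by
  obtain ⟨r, s, hrs, hr⟩ := h
  rcases exists_of_append_eq_append_cons hrs with ⟨t, rfl, rfl⟩ | ⟨t, rfl, rfl⟩
  · exact ⟨r, t ++ a :: q, by simp, hr⟩
  · refine ⟨p ++ a :: t, s, by simp, ?_⟩
    simp only [List.mem_append, List.mem_cons]
    rintro b (hb | rfl | hb)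
    exacts [hr b (by simp [hb]), hca, hr b (by simp [hb])]

lemma Cancelable.two_le_length {w : Word V} (h : Cancelable Γ w) : 2 ≤ w.length := by
  obtain ⟨x, a, y, z, rfl, -⟩ := h
  simp
  omega

lemma isReduced_nil : IsReduced Γ [] := fun h => by simpa using h.two_le_length

lemma IsReduced.of_cons {a : V × Bool} {w : Word V} (h : IsReduced Γ (a :: w)) :
    IsReduced Γ w := by
  rintro ⟨x, b, u, z, rfl, hu⟩
  exact h ⟨a :: x, b, u, z, rfl, hu⟩

lemma IsReduced.not_frontMovable {a : V × Bool} {w : Word V} (h : IsReduced Γ (a :: w)) :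
    ¬ FrontMovable Γ (invLetter a) w := by
  rintro ⟨p, q, rfl, hp⟩
  exact h ⟨[], a, p, q, rfl, hp⟩

lemma Cancelable.reverse {w : Word V} (h : Cancelable Γ w) : Cancelable Γ w.reverse := by
  obtain ⟨x, a, y, z, rfl, hy⟩ := h
  exact ⟨z.reverse, invLetter a, y.reverse, x.reverse, by simp,
    fun b hb => hy b (List.mem_reverse.mp hb)⟩

lemma isReduced_reverse_iff {w : Word V} : IsReduced Γ w.reverse ↔ IsReduced Γ w :=
  ⟨fun h hc => h hc.reverse, fun h hc => h (by simpa using hc.reverse)⟩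

lemma IsReduced.erase {p q : Word V} {c : V × Bool} (hw : IsReduced Γ (p ++ c :: q))
    (hp : ∀ b ∈ p, Γ.m c.1 b.1 ≠ 0) : IsReduced Γ (p ++ q) := by
  rintro ⟨x, a, y, z, h, hy⟩
  apply hw
  rcases exists_of_append_eq_append_cons h with ⟨t, rfl, ht⟩ | ⟨t, rfl, rfl⟩
  · rcases exists_of_append_eq_append_cons ht.symm with ⟨u, rfl, rfl⟩ | ⟨u, rfl, rfl⟩
    · exact ⟨x, a, y, u ++ c :: q, by simp, hy⟩
    · have hac : Γ.m a.1 c.1 ≠ 0 := by rw [Γ.symm]; exact hp a (by simp)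
      refine ⟨x, a, t ++ c :: u, z, by simp, ?_⟩
      simp only [List.mem_append, List.mem_cons]
      rintro b (hb | rfl | hb)
      exacts [hy b (by simp [hb]), hac, hy b (by simp [hb])]
  · exact ⟨p ++ c :: t, a, y, z, by simp, hy⟩

lemma IsReduced.erase_back {p q : Word V} {c : V × Bool} (hw : IsReduced Γ (p ++ c :: q))
    (hq : ∀ b ∈ q, Γ.m c.1 b.1 ≠ 0) : IsReduced Γ (p ++ q) := by
  rw [← isReduced_reverse_iff] at hw ⊢
  simp only [List.reverse_append, List.reverse_cons, List.append_assoc,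
    List.singleton_append] at hw ⊢
  exact hw.erase fun b hb => hq b (List.mem_reverse.mp hb)

lemma IsReduced.insert {p q : Word V} {a : V × Bool} (hw : IsReduced Γ (p ++ q))
    (hp : ∀ b ∈ p, Γ.m a.1 b.1 ≠ 0) (ha : ¬ FrontMovable Γ (invLetter a) (p ++ q)) :
    IsReduced Γ (p ++ a :: q) := by
  rintro ⟨x, e, y, z, h, hy⟩
  rcases exists_of_append_eq_append_cons h with ⟨t, rfl, ht⟩ | ⟨_ | ⟨f, t⟩, rfl, hq⟩
  · rcases exists_of_append_eq_append_cons ht.symm with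
      ⟨u, rfl, rfl⟩ | ⟨_ | ⟨f, u⟩, rfl, hq⟩
    · exact hw ⟨x, e, y, u ++ q, by simp, hy⟩
    · obtain ⟨rfl, rfl⟩ := List.cons.inj hq
      exact ha ⟨x, t ++ q, by simp, fun b hb => by simpa using hp b (by simp [hb])⟩
    · obtain ⟨rfl, rfl⟩ := List.cons.inj hq
      refine hw ⟨x, e, t ++ u, z, by simp, fun b hb => hy b ?_⟩
      rcases List.mem_append.mp hb with hb | hb <;> simp [hb]
  · obtain ⟨rfl, rfl⟩ := List.cons.inj hq
    refine ha ⟨p ++ y, z, by simp, ?_⟩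
    simp only [List.mem_append, invLetter_fst]
    rintro b (hb | hb)
    exacts [hp b hb, hy b hb]
  · obtain ⟨rfl, rfl⟩ := List.cons.inj hq
    exact hw ⟨p ++ t, e, y, z, by simp, hy⟩

lemma IsReduced.append {u w : Word V} (hu : IsReduced Γ u) (hw : IsReduced Γ w)
    (h : ∀ a, BackMovable Γ a u → ¬ FrontMovable Γ (invLetter a) w) :
    IsReduced Γ (u ++ w) := by
  rintro ⟨x, a, y, z, huw, hy⟩
  rcases exists_of_append_eq_append_cons huw with ⟨t, rfl, ht⟩ | ⟨t, rfl, rfl⟩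
  · rcases exists_of_append_eq_append_cons ht.symm with ⟨s, rfl, rfl⟩ | ⟨s, rfl, rfl⟩
    · exact hu ⟨x, a, y, s, by simp, hy⟩
    · exact h a ⟨x, t, rfl, fun b hb => hy b (by simp [hb])⟩
        ⟨s, z, rfl, fun b hb => hy b (by simp [hb])⟩
  · exact hw ⟨t, a, y, z, rfl, hy⟩

lemma Swap.exists_shuffle_erase {c : V × Bool} {s s' : Word V} (h : Swap Γ s s')
    {π κ : Word V} (hs : s = π ++ c :: κ) (hπ : ∀ b ∈ π, Γ.m c.1 b.1 ≠ 0) :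
    ∃ π' κ', s' = π' ++ c :: κ' ∧ (∀ b ∈ π', Γ.m c.1 b.1 ≠ 0) ∧
      Shuffle Γ (π ++ κ) (π' ++ κ') := by
  induction h generalizing π κ with
  | swap a b hab y =>
      match π, hs with
      | [], hs =>
          obtain ⟨rfl, rfl⟩ := List.cons.inj hs
          exact ⟨[b], y, rfl, by simpa using hab, by rfl⟩
      | [_], hs =>
          simp only [List.cons_append, List.nil_append, List.cons.injEq] at hs
          obtain ⟨rfl, rfl, rfl⟩ := hs
          exact ⟨[], _, rfl, by simp, by rfl⟩
      | _ :: _ :: π, hs =>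
          simp only [List.cons_append, List.cons.injEq] at hs
          obtain ⟨rfl, rfl, rfl⟩ := hs
          refine ⟨b :: a :: π, κ, rfl, fun x hx => hπ x ?_, .single (.swap a b hab _)⟩
          simp only [List.mem_cons] at hx ⊢
          tauto
  | @cons d w w' hst ih =>
      match π, hs with
      | [], hs =>
          obtain ⟨rfl, rfl⟩ := List.cons.inj hs
          exact ⟨[], w', rfl, by simp, .single hst⟩
      | _ :: π, hs =>
          obtain ⟨rfl, hw⟩ := List.cons.inj hs
          obtain ⟨π', κ', rfl, h2, h3⟩ := ih hw fun b hb => hπ b (by simp [hb])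
          refine ⟨d :: π', κ', rfl, ?_, h3.cons d⟩
          rintro x (_ | ⟨_, hx⟩)
          exacts [hπ d (by simp), h2 x hx]

lemma Shuffle.exists_shuffle_erase {c : V × Bool} {s s' : Word V} (h : Shuffle Γ s s')
    {π κ : Word V} (hs : s = π ++ c :: κ) (hπ : ∀ b ∈ π, Γ.m c.1 b.1 ≠ 0) :
    ∃ π' κ', s' = π' ++ c :: κ' ∧ (∀ b ∈ π', Γ.m c.1 b.1 ≠ 0) ∧
      Shuffle Γ (π ++ κ) (π' ++ κ') := by
  induction h with
  | refl => exact ⟨π, κ, hs, hπ, by rfl⟩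
  | tail _ hstep ih =>
      obtain ⟨π₁, κ₁, h1, h2, h3⟩ := ih
      obtain ⟨π₂, κ₂, h1', h2', h3'⟩ := hstep.exists_shuffle_erase h1 h2
      exact ⟨π₂, κ₂, h1', h2', h3.trans h3'⟩

lemma Shuffle.exists_of_cons {c : V × Bool} {w s : Word V} (h : Shuffle Γ (c :: w) s) :
    ∃ π κ, s = π ++ c :: κ ∧ (∀ b ∈ π, Γ.m c.1 b.1 ≠ 0) ∧ Shuffle Γ w (π ++ κ) :=
  h.exists_shuffle_erase (π := []) rfl (by simp)

lemma Shuffle.exists_of_concat {c : V × Bool} {w s : Word V} (h : Shuffle Γ (w ++ [c]) s) :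
    ∃ π κ, s = π ++ c :: κ ∧ (∀ b ∈ κ, Γ.m c.1 b.1 ≠ 0) ∧ Shuffle Γ w (π ++ κ) := by
  have h' : Shuffle Γ (c :: w.reverse) s.reverse := by simpa using h.reverse
  obtain ⟨π, κ, h1, h2, h3⟩ := h'.exists_of_cons
  refine ⟨κ.reverse, π.reverse, ?_, fun b hb => h2 b (by simpa using hb), ?_⟩
  · simpa using congrArg List.reverse h1
  · simpa using h3.reverse

lemma FrontMovable.of_shuffle {c : V × Bool} {w w' : Word V} (h : FrontMovable Γ c w)
    (hw : Shuffle Γ w w') : FrontMovable Γ c w' := by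
  obtain ⟨p, q, h1, h2⟩ := h
  obtain ⟨π, κ, h1', h2', -⟩ := hw.exists_shuffle_erase h1 h2
  exact ⟨π, κ, h1', h2'⟩

variable (Γ) in
open Classical in
noncomputable def consReduce (a : V × Bool) : Word V → Word V
  | [] => [a]
  | b :: w =>
      if b = invLetter a then w
      else if Γ.m a.1 b.1 = 0 then a :: b :: w else b :: consReduce a w

lemma ne_invLetter_of_adj {a b : V × Bool} (h : Γ.m a.1 b.1 ≠ 0) : b ≠ invLetter a := by
  rintro rfl
  exact h (Γ.loopless a.1)

lemma fst_ne_of_adj {a b : V × Bool} (h : Γ.m a.1 b.1 ≠ 0) : a.1 ≠ b.1 := by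
  intro hab
  exact h (hab ▸ Γ.loopless a.1)

lemma consReduce_append_invLetter_cons {a : V × Bool} {p : Word V} (q : Word V)
    (hp : ∀ b ∈ p, Γ.m a.1 b.1 ≠ 0) : consReduce Γ a (p ++ invLetter a :: q) = p ++ q := by
  induction p with
  | nil => simp [consReduce]
  | cons b p ih =>
      have hb : Γ.m a.1 b.1 ≠ 0 := hp b (by simp)
      simp [consReduce, ne_invLetter_of_adj hb, hb, ih fun x hx => hp x (by simp [hx])]

lemma exists_consReduce_eq {a : V × Bool} {w : Word V}
    (h : ¬ FrontMovable Γ (invLetter a) w) :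
    ∃ p q, w = p ++ q ∧ consReduce Γ a w = p ++ a :: q ∧ ∀ b ∈ p, Γ.m a.1 b.1 ≠ 0 := by
  induction w with
  | nil => exact ⟨[], [], rfl, by simp [consReduce], by simp⟩
  | cons b w ih =>
      have hb : b ≠ invLetter a := fun hb => h (hb ▸ frontMovable_cons w)
      by_cases hab : Γ.m a.1 b.1 = 0
      · exact ⟨[], b :: w, rfl, by simp [consReduce, hb, hab], by simp⟩
      · obtain ⟨p, q, rfl, h2, hp⟩ := ih fun hw => h (hw.cons hab)
        refine ⟨b :: p, q, rfl, by simp [consReduce, hb, hab, h2], ?_⟩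
        rintro x (_ | ⟨_, hx⟩)
        exacts [hab, hp x hx]

lemma shuffle_consReduce {a : V × Bool} {w : Word V} (h : ¬ FrontMovable Γ (invLetter a) w) :
    Shuffle Γ (consReduce Γ a w) (a :: w) := by
  obtain ⟨p, q, rfl, h2, hp⟩ := exists_consReduce_eq h
  rw [h2]
  exact shuffle_move_front a q hp

lemma consReduce_subset (a : V × Bool) (w : Word V) : consReduce Γ a w ⊆ a :: w := by
  induction w with
  | nil => simp [consReduce]
  | cons b w ih =>
      unfold consReduce
      split_ifs
      · exact List.Subset.trans (List.subset_cons_self b w) (List.subset_cons_self a _)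
      · exact List.Subset.refl _
      · exact List.cons_subset.mpr ⟨by simp, List.Subset.trans ih (List.cons_subset_cons a
          (List.subset_cons_self b w))⟩

lemma eval_consReduce (hΓ : Γ.IsRightAngled) (a : V × Bool) (w : Word V) :
    eval Γ (consReduce Γ a w) = evalLetter Γ a * eval Γ w := by
  by_cases h : FrontMovable Γ (invLetter a) w
  · obtain ⟨p, q, rfl, hp⟩ := h
    rw [consReduce_append_invLetter_cons (a := a) q hp]
    have hc : Commute (evalLetter Γ a) (eval Γ p) := by
      simpa using (commute_evalLetter_eval hΓ hp).inv_left
    simp only [eval_append, eval_cons, evalLetter_invLetter, ← mul_assoc, hc.eq]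
    group
  · rw [(shuffle_consReduce h).eval_eq hΓ, eval_cons]

lemma IsReduced.consReduce {a : V × Bool} {w : Word V} (hw : IsReduced Γ w) :
    IsReduced Γ (Raag.consReduce Γ a w) := by
  by_cases h : FrontMovable Γ (invLetter a) w
  · obtain ⟨p, q, rfl, hp⟩ := h
    rw [consReduce_append_invLetter_cons (a := a) q hp]
    exact hw.erase hp
  · obtain ⟨p, q, rfl, h2, hp⟩ := exists_consReduce_eq h
    rw [h2]
    exact hw.insert hp h

lemma Swap.consReduce {a : V × Bool} {w w' : Word V} (h : Swap Γ w w') :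
    Shuffle Γ (Raag.consReduce Γ a w) (Raag.consReduce Γ a w') := by
  by_cases hw : FrontMovable Γ (invLetter a) w
  · obtain ⟨p, q, rfl, hp⟩ := hw
    obtain ⟨π, κ, rfl, hπ, hs⟩ := h.exists_shuffle_erase rfl hp
    rwa [consReduce_append_invLetter_cons (a := a) q hp,
      consReduce_append_invLetter_cons (a := a) κ hπ]
  · have hw' : ¬ FrontMovable Γ (invLetter a) w' :=
      fun hw' => hw (hw'.of_shuffle (.single h.symm))
    exact (shuffle_consReduce hw).trans
      (((Shuffle.single h).cons a).trans (shuffle_consReduce hw').symm)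

lemma Shuffle.consReduce {a : V × Bool} {w w' : Word V} (h : Shuffle Γ w w') :
    Shuffle Γ (Raag.consReduce Γ a w) (Raag.consReduce Γ a w') := by
  induction h with
  | refl => rfl
  | tail _ h ih => exact ih.trans h.consReduce

lemma shuffle_consReduce_invLetter_consReduce (a : V × Bool) {w : Word V}
    (hw : IsReduced Γ w) : Shuffle Γ (consReduce Γ (invLetter a) (consReduce Γ a w)) w := by
  by_cases h : FrontMovable Γ (invLetter a) w
  · obtain ⟨p, q, rfl, hp⟩ := h
    rw [consReduce_append_invLetter_cons (a := a) q hp]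
    have hnot : ¬ FrontMovable Γ (invLetter (invLetter a)) (p ++ q) := by
      rw [invLetter_invLetter]
      rintro ⟨r, s, hrs, hr⟩
      rcases exists_of_append_eq_append_cons hrs with ⟨t, rfl, rfl⟩ | ⟨t, rfl, rfl⟩
      · exact hw ⟨r, a, t, q, by simp, fun c hc => hp c (by simp [hc])⟩
      · exact hw ⟨p, invLetter a, t, s, by simp, fun c hc => hr c (by simp [hc])⟩
    exact (shuffle_consReduce hnot).trans (shuffle_move_front _ q hp).symm
  · obtain ⟨p, q, rfl, h2, hp⟩ := exists_consReduce_eq h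
    have h3 := consReduce_append_invLetter_cons (a := invLetter a) q hp
    rw [invLetter_invLetter, ← h2] at h3
    rw [h3]

lemma consReduce_consReduce_of_frontMovable {a b : V × Bool} (p t s : Word V)
    (hp : ∀ c ∈ p, Γ.m a.1 c.1 ≠ 0) (hpt : ∀ c ∈ p ++ invLetter a :: t, Γ.m b.1 c.1 ≠ 0) :
    consReduce Γ b (consReduce Γ a (p ++ invLetter a :: (t ++ invLetter b :: s))) =
      p ++ (t ++ s) ∧
    consReduce Γ a (consReduce Γ b (p ++ invLetter a :: (t ++ invLetter b :: s))) =
      p ++ (t ++ s) := by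
  have hpt' : ∀ c ∈ p ++ t, Γ.m b.1 c.1 ≠ 0 := fun c hc => hpt c (by
    rcases List.mem_append.mp hc with hc | hc <;> simp [hc])
  constructor
  · rw [consReduce_append_invLetter_cons (a := a) _ hp, ← List.append_assoc,
      consReduce_append_invLetter_cons (a := b) s hpt', List.append_assoc]
  · rw [show p ++ invLetter a :: (t ++ invLetter b :: s) =
        (p ++ invLetter a :: t) ++ invLetter b :: s by simp,
      consReduce_append_invLetter_cons (a := b) s hpt, List.append_assoc, List.cons_append,
      consReduce_append_invLetter_cons (a := a) (t ++ s) hp]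

lemma shuffle_consReduce_comm_of_frontMovable {a b : V × Bool} (hab : Γ.m a.1 b.1 ≠ 0)
    {w : Word V} (ha : FrontMovable Γ (invLetter a) w) (hb : ¬ FrontMovable Γ (invLetter b) w) :
    Shuffle Γ (consReduce Γ a (consReduce Γ b w)) (consReduce Γ b (consReduce Γ a w)) := by
  obtain ⟨p, q, rfl, hp⟩ := ha
  have hba : Γ.m b.1 a.1 ≠ 0 := by rwa [Γ.symm]
  have hb' : ¬ FrontMovable Γ (invLetter b) (p ++ q) := fun h => hb (h.insert hba)
  obtain ⟨r, s, hrs, h2, hr⟩ := exists_consReduce_eq hb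
  rw [consReduce_append_invLetter_cons (a := a) q hp, h2]
  refine Shuffle.trans ?_ (shuffle_consReduce hb').symm
  rcases exists_of_append_eq_append_cons hrs.symm with ⟨t, rfl, rfl⟩ | ⟨t, rfl, rfl⟩
  · have hpt : ∀ c ∈ p ++ t, Γ.m b.1 c.1 ≠ 0 := fun c hc => hr c (by
      rcases List.mem_append.mp hc with hc | hc <;> simp [hc])
    rw [List.append_assoc, List.cons_append, consReduce_append_invLetter_cons (a := a) _ hp,
      ← List.append_assoc]
    simpa using shuffle_move_front b s hpt
  · have hrb : ∀ c ∈ r ++ b :: t, Γ.m a.1 c.1 ≠ 0 := by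
      simp only [List.mem_append, List.mem_cons]
      rintro c (hc | rfl | hc)
      exacts [hp c (by simp [hc]), hab, hp c (by simp [hc])]
    rw [show r ++ b :: (t ++ invLetter a :: q) = (r ++ b :: t) ++ invLetter a :: q by simp,
      consReduce_append_invLetter_cons (a := a) q hrb, List.append_assoc, List.cons_append,
      List.append_assoc]
    exact shuffle_move_front b (t ++ q) hr

lemma not_frontMovable_consReduce {a b : V × Bool} (hab : a.1 ≠ b.1) {w : Word V}
    (ha : ¬ FrontMovable Γ (invLetter a) w) (hb : ¬ FrontMovable Γ (invLetter b) w) :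
    ¬ FrontMovable Γ (invLetter a) (consReduce Γ b w) := by
  obtain ⟨r, s, rfl, h2, -⟩ := exists_consReduce_eq hb
  rw [h2]
  exact fun h => ha (h.of_insert fun h' => hab (by rw [← h']; rfl))

lemma shuffle_consReduce_comm {a b : V × Bool} (hab : Γ.m a.1 b.1 ≠ 0) (w : Word V) :
    Shuffle Γ (consReduce Γ a (consReduce Γ b w)) (consReduce Γ b (consReduce Γ a w)) := by
  have hba : Γ.m b.1 a.1 ≠ 0 := by rwa [Γ.symm]
  by_cases ha : FrontMovable Γ (invLetter a) w <;> by_cases hb : FrontMovable Γ (invLetter b) w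
  · obtain ⟨p, q, rfl, hp⟩ := ha
    obtain ⟨r, s, hrs, hr⟩ := hb
    have hne : invLetter a ≠ invLetter b := fun h =>
      fst_ne_of_adj hab (by simpa using congrArg Prod.fst h)
    rcases exists_of_append_cons_eq_append_cons hrs hne with
      ⟨t, rfl, rfl⟩ | ⟨t, rfl, rfl⟩
    · obtain ⟨h1, h2⟩ := consReduce_consReduce_of_frontMovable (a := a) (b := b) p t s hp hr
      rw [h1, h2]
    · obtain ⟨h1, h2⟩ := consReduce_consReduce_of_frontMovable (a := b) (b := a) r t q hr hp
      simp only [List.append_assoc, List.cons_append]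
      rw [h1, h2]
  · exact shuffle_consReduce_comm_of_frontMovable hab ha hb
  · exact (shuffle_consReduce_comm_of_frontMovable hba hb ha).symm
  · have e1 := (shuffle_consReduce (not_frontMovable_consReduce (fst_ne_of_adj hab) ha hb)).trans
      ((shuffle_consReduce hb).cons a)
    have e2 := (shuffle_consReduce (not_frontMovable_consReduce (fst_ne_of_adj hba) hb ha)).trans
      ((shuffle_consReduce ha).cons b)
    exact e1.trans ((Shuffle.single (.swap a b hab w)).trans e2.symm)

variable (Γ) in
def reducedSetoid : Setoid {w : Word V // IsReduced Γ w} where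
  r u v := Shuffle Γ u.1 v.1
  iseqv := ⟨fun _ => .refl _, .symm, .trans⟩

variable (Γ) in
abbrev ReducedWords : Type := Quotient (reducedSetoid Γ)

variable (Γ) in
noncomputable def letterAct (a : V × Bool) : ReducedWords Γ → ReducedWords Γ :=
  Quotient.map (fun w => ⟨consReduce Γ a w.1, w.2.consReduce⟩) fun _ _ h => h.consReduce

lemma letterAct_invLetter_letterAct (a : V × Bool) (x : ReducedWords Γ) :
    letterAct Γ (invLetter a) (letterAct Γ a x) = x := by
  induction x using Quotient.ind with
  | _ w => exact Quotient.sound (shuffle_consReduce_invLetter_consReduce a w.2)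

variable (Γ) in
noncomputable def letterPerm (a : V × Bool) : Equiv.Perm (ReducedWords Γ) where
  toFun := letterAct Γ a
  invFun := letterAct Γ (invLetter a)
  left_inv := letterAct_invLetter_letterAct a
  right_inv x := by
    simpa using letterAct_invLetter_letterAct (invLetter a) x

lemma letterPerm_comm {u v : V} (h : Γ.m u v ≠ 0) :
    letterPerm Γ (u, true) * letterPerm Γ (v, true) =
      letterPerm Γ (v, true) * letterPerm Γ (u, true) := by
  ext x
  induction x using Quotient.ind with
  | _ w => exact Quotient.sound (shuffle_consReduce_comm h w.1)

variable (Γ) in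
noncomputable def toPerm (hΓ : Γ.IsRightAngled) : Γ.ArtinGroup →* Equiv.Perm (ReducedWords Γ) :=
  PresentedGroup.toGroup (f := fun v => letterPerm Γ (v, true)) <| by
    rintro r ⟨u, v, huv, rfl⟩
    rw [(hΓ u v).resolve_left huv]
    simp [word, letterPerm_comm huv]

lemma toPerm_evalLetter (hΓ : Γ.IsRightAngled) (a : V × Bool) :
    toPerm Γ hΓ (evalLetter Γ a) = letterPerm Γ a := by
  obtain ⟨v, _ | _⟩ := a
  · rw [evalLetter, if_neg Bool.false_ne_true, map_inv]
    exact congrArg (·⁻¹) (PresentedGroup.toGroup.of _)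
  · exact PresentedGroup.toGroup.of _

variable (Γ) in
noncomputable def normalize : Word V → Word V
  | [] => []
  | a :: w => consReduce Γ a (normalize w)

lemma isReduced_normalize : ∀ w : Word V, IsReduced Γ (normalize Γ w)
  | [] => isReduced_nil
  | _ :: w => (isReduced_normalize w).consReduce

lemma eval_normalize (hΓ : Γ.IsRightAngled) : ∀ w : Word V, eval Γ (normalize Γ w) = eval Γ w
  | [] => rfl
  | a :: w => by rw [normalize, eval_consReduce hΓ, eval_normalize hΓ w, eval_cons]

lemma normalize_subset : ∀ w : Word V, normalize Γ w ⊆ w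
  | [] => List.Subset.refl _
  | a :: w => List.Subset.trans (consReduce_subset a _)
      (List.cons_subset_cons a (normalize_subset w))

lemma IsReduced.shuffle_normalize {w : Word V} (hw : IsReduced Γ w) :
    Shuffle Γ (normalize Γ w) w := by
  induction w with
  | nil => rfl
  | cons a w ih =>
      exact (ih hw.of_cons).consReduce.trans
        (shuffle_consReduce (by simpa using hw.not_frontMovable))

lemma toPerm_eval (hΓ : Γ.IsRightAngled) :
    ∀ w : Word V, toPerm Γ hΓ (eval Γ w) (Quotient.mk _ ⟨[], isReduced_nil⟩) =
      Quotient.mk (reducedSetoid Γ) ⟨normalize Γ w, isReduced_normalize w⟩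
  | [] => rfl
  | a :: w => by
      rw [eval_cons, map_mul, Equiv.Perm.mul_apply, toPerm_eval hΓ w, toPerm_evalLetter]
      rfl

theorem Shuffle.of_eval_eq (hΓ : Γ.IsRightAngled) {w w' : Word V} (hw : IsReduced Γ w)
    (hw' : IsReduced Γ w') (h : eval Γ w = eval Γ w') : Shuffle Γ w w' := by
  have hnf : Shuffle Γ (normalize Γ w) (normalize Γ w') :=
    Quotient.exact ((toPerm_eval hΓ w).symm.trans (h ▸ toPerm_eval hΓ w'))
  exact (hw.shuffle_normalize.symm.trans hnf).trans hw'.shuffle_normalize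

section Conjugation

variable {G : Type*} [Group G]

lemma mem_conjP {g x : G} {H : Subgroup G} : x ∈ conjP g H ↔ g⁻¹ * x * g ∈ H := by
  simp only [conjP, Subgroup.mem_map, MulEquiv.coe_toMonoidHom, MulAut.conj_apply]
  exact ⟨by rintro ⟨y, hy, rfl⟩; simpa [mul_assoc] using hy,
    fun h => ⟨_, h, by simp [mul_assoc]⟩⟩

@[simp] lemma conjP_one (H : Subgroup G) : conjP 1 H = H := by
  ext x
  simp [mem_conjP]

lemma conjP_conjP (g h : G) (H : Subgroup G) : conjP g (conjP h H) = conjP (g * h) H := by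
  ext x
  simp only [mem_conjP, mul_inv_rev, mul_assoc]

lemma conjP_inf (g : G) (H K : Subgroup G) : conjP g (H ⊓ K) = conjP g H ⊓ conjP g K := by
  ext x
  simp only [Subgroup.mem_inf, mem_conjP]

lemma conjP_of_mem {H : Subgroup G} {g : G} (hg : g ∈ H) : conjP g H = H := by
  ext x
  rw [mem_conjP]
  exact ⟨fun hx => by simpa [mul_assoc] using H.mul_mem (H.mul_mem hg hx) (H.inv_mem hg),
    fun hx => H.mul_mem (H.mul_mem (H.inv_mem hg) hx) hg⟩

end Conjugation

lemma _root_.ArtinGraph.IsParabolic.conjP {P : Subgroup Γ.ArtinGroup} (g : Γ.ArtinGroup)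
    (h : Γ.IsParabolic P) : Γ.IsParabolic (ArtinGraph.conjP g P) := by
  obtain ⟨S, k, rfl⟩ := h
  exact ⟨S, g * k, conjP_conjP g k _⟩

lemma isParabolic_std (S : Set V) : Γ.IsParabolic (Γ.std S) := ⟨S, 1, (conjP_one _).symm⟩

lemma std_mono {S T : Set V} (h : S ⊆ T) : Γ.std S ≤ Γ.std T :=
  Subgroup.closure_mono (Set.image_mono h)

lemma evalLetter_mem_std {S : Set V} {c : V × Bool} (h : c.1 ∈ S) :
    evalLetter Γ c ∈ Γ.std S := by
  have hg : Γ.gen c.1 ∈ Γ.std S := Subgroup.subset_closure ⟨c.1, h, rfl⟩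
  unfold evalLetter
  split_ifs
  exacts [hg, inv_mem hg]

lemma eval_mem_std {S : Set V} {w : Word V} (h : ∀ c ∈ w, c.1 ∈ S) : eval Γ w ∈ Γ.std S := by
  induction w with
  | nil => exact one_mem _
  | cons a w ih =>
      rw [eval_cons]
      exact mul_mem (evalLetter_mem_std (h a (by simp))) (ih fun c hc => h c (by simp [hc]))

lemma exists_eval_eq_of_mem_std {S : Set V} {x : Γ.ArtinGroup} (h : x ∈ Γ.std S) :
    ∃ w : Word V, eval Γ w = x ∧ ∀ c ∈ w, c.1 ∈ S := by
  induction h using Subgroup.closure_induction with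
  | mem y hy =>
      obtain ⟨v, hv, rfl⟩ := hy
      exact ⟨[(v, true)], by simp [evalLetter], by simpa using hv⟩
  | one => exact ⟨[], rfl, by simp⟩
  | mul y z _ _ hy hz =>
      obtain ⟨wy, rfl, hy⟩ := hy
      obtain ⟨wz, rfl, hz⟩ := hz
      refine ⟨wy ++ wz, eval_append wy wz, fun c hc => ?_⟩
      rcases List.mem_append.mp hc with hc | hc
      exacts [hy c hc, hz c hc]
  | inv y _ hy =>
      obtain ⟨wy, rfl, hy⟩ := hy
      refine ⟨wy.reverse.map invLetter, eval_reverse_map_invLetter wy, ?_⟩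
      simp only [List.mem_map, List.mem_reverse]
      rintro _ ⟨d, hd, rfl⟩
      exact hy d hd

lemma exists_isReduced_of_mem_std (hΓ : Γ.IsRightAngled) {S : Set V} {x : Γ.ArtinGroup}
    (h : x ∈ Γ.std S) : ∃ w : Word V, IsReduced Γ w ∧ eval Γ w = x ∧ ∀ c ∈ w, c.1 ∈ S := by
  obtain ⟨w, rfl, hw⟩ := exists_eval_eq_of_mem_std h
  exact ⟨normalize Γ w, isReduced_normalize w, eval_normalize hΓ w,
    fun c hc => hw c (normalize_subset w hc)⟩

lemma std_univ : Γ.std Set.univ = ⊤ := by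
  rw [std, Set.image_univ]
  exact PresentedGroup.closure_range_of _

lemma exists_isReduced (hΓ : Γ.IsRightAngled) (x : Γ.ArtinGroup) :
    ∃ w : Word V, IsReduced Γ w ∧ eval Γ w = x := by
  obtain ⟨w, hw, hx, -⟩ := exists_isReduced_of_mem_std hΓ (std_univ (Γ := Γ) ▸ Subgroup.mem_top x)
  exact ⟨w, hw, hx⟩

lemma Shuffle.levi {t₁ t₂ s₁ s₂ : Word V} (h : Shuffle Γ (t₁ ++ t₂) (s₁ ++ s₂)) :
    ∃ p q r z, Shuffle Γ t₁ (p ++ q) ∧ Shuffle Γ t₂ (r ++ z) ∧ Shuffle Γ s₁ (p ++ r) ∧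
      Shuffle Γ s₂ (q ++ z) ∧ ∀ b ∈ q, ∀ c ∈ r, Γ.m b.1 c.1 ≠ 0 := by
  induction t₁ generalizing s₁ s₂ with
  | nil => exact ⟨[], [], s₁, s₂, by rfl, h, by rfl, by rfl, by simp⟩
  | cons c t₁ ih =>
      obtain ⟨π, κ, hs, hπ, hse⟩ := Shuffle.exists_of_cons h
      rcases exists_of_append_eq_append_cons hs with ⟨u, rfl, rfl⟩ | ⟨u, rfl, rfl⟩
      · obtain ⟨p, q, r, z, e₁, e₂, e₃, e₄, hqr⟩ := ih (s₁ := π ++ u) (by simpa using hse)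
        exact ⟨c :: p, q, r, z, e₁.cons c, e₂, (shuffle_move_front c u hπ).trans (e₃.cons c),
          e₄, hqr⟩
      · obtain ⟨p, q, r, z, e₁, e₂, e₃, e₄, hqr⟩ := ih (s₂ := u ++ κ) (by simpa using hse)
        have hs₁ : ∀ b, b ∈ p ++ r → Γ.m c.1 b.1 ≠ 0 :=
          fun b hb => hπ b (List.mem_append_left _ (e₃.mem_iff.mpr hb))
        refine ⟨p, c :: q, r, z, (e₁.cons c).trans
            (shuffle_move_front c q fun b hb => hs₁ b (by simp [hb])).symm, e₂, e₃,
          (shuffle_move_front c κ fun b hb => hπ b (by simp [hb])).trans (e₄.cons c), ?_⟩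
        rintro b (_ | ⟨_, hb⟩) d hd
        exacts [hs₁ d (by simp [hd]), hqr b hb d hd]

lemma FrontMovable.mem {c : V × Bool} {w : Word V} (h : FrontMovable Γ c w) : c ∈ w := by
  obtain ⟨p, q, rfl, -⟩ := h
  simp

lemma BackMovable.mem {c : V × Bool} {w : Word V} (h : BackMovable Γ c w) : c ∈ w := by
  obtain ⟨p, q, rfl, -⟩ := h
  simp

lemma eq_nil_of_shuffle_append {w r z : Word V} (h : Shuffle Γ w (r ++ z))
    (hz : ∀ c ∈ z, ¬ BackMovable Γ c w) : z = [] := by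
  rcases List.eq_nil_or_concat z with rfl | ⟨z, e, rfl⟩
  · rfl
  · have h' : Shuffle Γ (r ++ z ++ [e]) w := by simpa using h.symm
    obtain ⟨π, κ, hw, hκ, -⟩ := h'.exists_of_concat
    exact absurd ⟨π, κ, hw, hκ⟩ (hz e (by simp))

lemma commute_gen_eval (hΓ : Γ.IsRightAngled) {v : V} {w : Word V}
    (h : ∀ c ∈ w, Γ.m v c.1 ≠ 0) : Commute (Γ.gen v) (eval Γ w) := by
  simpa [evalLetter] using commute_evalLetter_eval hΓ (a := (v, true)) h

lemma std_inf_conjP_le (hΓ : Γ.IsRightAngled) {A B : Set V} {w : Word V} (hw : IsReduced Γ w)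
    (hA : ∀ c : V × Bool, c.1 ∈ A → ¬ FrontMovable Γ c w)
    (hB : ∀ c : V × Bool, c.1 ∈ B → ¬ BackMovable Γ c w) :
    Γ.std A ⊓ conjP (eval Γ w) (Γ.std B) ≤
      Γ.std {v | v ∈ A ∧ v ∈ B ∧ ∀ c ∈ w, Γ.m v c.1 ≠ 0} := by
  intro x hx
  obtain ⟨hxA, hxB⟩ := Subgroup.mem_inf.mp hx
  rw [mem_conjP] at hxB
  obtain ⟨u, hu, rfl, huA⟩ := exists_isReduced_of_mem_std hΓ hxA
  obtain ⟨v, hv, hveq, hvB⟩ := exists_isReduced_of_mem_std hΓ hxB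
  have huw : IsReduced Γ (u ++ w) :=
    hu.append hw fun a ha hfm => hA (invLetter a) (huA a ha.mem) hfm
  have hwv : IsReduced Γ (w ++ v) :=
    hw.append hv fun a ha hfm => hB a (hvB (invLetter a) hfm.mem) ha
  have hsh : Shuffle Γ (u ++ w) (w ++ v) :=
    Shuffle.of_eval_eq hΓ huw hwv (by rw [eval_append, eval_append, hveq]; group)
  obtain ⟨p, q, r, z, e₁, e₂, e₃, e₄, hqr⟩ := hsh.levi
  obtain rfl : z = [] := eq_nil_of_shuffle_append e₂ fun c hc =>
    hB c (hvB c (e₄.mem_iff.mpr (by simp [hc])))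
  obtain rfl : p = [] := by
    have h₀ := hsh.length_eq
    have h₁ := e₁.length_eq
    have h₄ := e₄.length_eq
    simp only [List.length_append, List.length_nil, add_zero] at h₀ h₁ h₄
    exact List.eq_nil_of_length_eq_zero (by omega)
  simp only [List.nil_append, List.append_nil] at e₁ e₃ e₄
  rw [e₁.eval_eq hΓ]
  exact eval_mem_std fun c hc => ⟨huA c (e₁.mem_iff.mpr hc), hvB c (e₄.mem_iff.mpr hc),
    fun d hd => hqr c hc d (e₃.mem_iff.mp hd)⟩

lemma std_le_conjP (hΓ : Γ.IsRightAngled) {B : Set V} {w : Word V} :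
    Γ.std {v | v ∈ B ∧ ∀ c ∈ w, Γ.m v c.1 ≠ 0} ≤ conjP (eval Γ w) (Γ.std B) := by
  rw [std, Subgroup.closure_le]
  rintro _ ⟨v, hv, rfl⟩
  rw [SetLike.mem_coe, mem_conjP, mul_assoc, (commute_gen_eval hΓ hv.2).eq, inv_mul_cancel_left]
  exact Subgroup.subset_closure ⟨v, hv.1, rfl⟩

lemma std_inf_conjP_eq (hΓ : Γ.IsRightAngled) {A B : Set V} {w : Word V} (hw : IsReduced Γ w)
    (hA : ∀ c : V × Bool, c.1 ∈ A → ¬ FrontMovable Γ c w)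
    (hB : ∀ c : V × Bool, c.1 ∈ B → ¬ BackMovable Γ c w) :
    Γ.std A ⊓ conjP (eval Γ w) (Γ.std B) =
      Γ.std {v | v ∈ A ∧ v ∈ B ∧ ∀ c ∈ w, Γ.m v c.1 ≠ 0} := by
  refine le_antisymm (std_inf_conjP_le hΓ hw hA hB) (le_inf ?_ ?_)
  · exact std_mono fun v hv => hv.1
  · exact (std_mono fun v hv => hv.2).trans (std_le_conjP hΓ)

theorem isParabolic_std_inf_conjP (hΓ : Γ.IsRightAngled) (A B : Set V) (w : Word V)
    (hw : IsReduced Γ w) : Γ.IsParabolic (Γ.std A ⊓ conjP (eval Γ w) (Γ.std B)) := by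
  by_cases hA : ∃ c : V × Bool, c.1 ∈ A ∧ FrontMovable Γ c w
  · obtain ⟨c, hcA, p, q, rfl, hp⟩ := hA
    have hev : eval Γ (p ++ c :: q) = evalLetter Γ c * eval Γ (p ++ q) := by
      rw [(shuffle_move_front c q hp).eval_eq hΓ, eval_cons]
    have hconj : Γ.std A ⊓ conjP (eval Γ (p ++ c :: q)) (Γ.std B) =
        conjP (evalLetter Γ c) (Γ.std A ⊓ conjP (eval Γ (p ++ q)) (Γ.std B)) := by
      rw [conjP_inf, conjP_of_mem (evalLetter_mem_std hcA), conjP_conjP, ← hev]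
    rw [hconj]
    exact (isParabolic_std_inf_conjP hΓ A B (p ++ q) (hw.erase hp)).conjP _
  by_cases hB : ∃ c : V × Bool, c.1 ∈ B ∧ BackMovable Γ c w
  · obtain ⟨c, hcB, p, q, rfl, hq⟩ := hB
    have hev : eval Γ (p ++ c :: q) = eval Γ (p ++ q) * evalLetter Γ c := by
      rw [(shuffle_move_back p c hq).eval_eq hΓ]
      simp [mul_assoc]
    rw [hev, ← conjP_conjP, conjP_of_mem (evalLetter_mem_std hcB)]
    exact isParabolic_std_inf_conjP hΓ A B (p ++ q) (hw.erase_back hq)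
  simp only [not_exists, not_and] at hA hB
  rw [std_inf_conjP_eq hΓ hw hA hB]
  exact isParabolic_std _
termination_by w.length
decreasing_by all_goals subst_vars; simp

end Raag

open ArtinGraph in
theorem stmt18_general {V : Type} (Γ : ArtinGraph V)
    (hRAAG : ∀ u v, Γ.m u v = 0 ∨ Γ.m u v = 2)
    (P Q : Subgroup Γ.ArtinGroup) (hP : Γ.IsParabolic P) (hQ : Γ.IsParabolic Q) :
    Γ.IsParabolic (P ⊓ Q) := by
  obtain ⟨S, g, rfl⟩ := hP
  obtain ⟨T, h, rfl⟩ := hQ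
  obtain ⟨w, hw, hwh⟩ := Raag.exists_isReduced hRAAG (g⁻¹ * h)
  have hsplit : conjP g (Γ.std S) ⊓ conjP h (Γ.std T) =
      conjP g (Γ.std S ⊓ conjP (Raag.eval Γ w) (Γ.std T)) := by
    rw [Raag.conjP_inf, Raag.conjP_conjP, hwh, mul_inv_cancel_left]
  rw [hsplit]
  exact (Raag.isParabolic_std_inf_conjP hRAAG S T w hw).conjP g

open ArtinGraph in
/-- in a right-angled Artin group (all labels equal to `2`), the
intersection of any two parabolic subgroups is a parabolic subgroup. -/
theorem stmt18 {V : Type} [Finite V] (Γ : ArtinGraph V)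
    (hRAAG : ∀ u v, Γ.m u v = 0 ∨ Γ.m u v = 2)
    (P Q : Subgroup Γ.ArtinGroup) (hP : Γ.IsParabolic P) (hQ : Γ.IsParabolic Q) :
    Γ.IsParabolic (P ⊓ Q) :=
  stmt18_general Γ hRAAG P Q hP hQ
end
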